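/- Let n ≥ 3, let x : Fin n → ℝ with S_1(x) ≥ 0 and S_2(x) ≥ 0, and let c ≥ 0 be a real number. Then S_1(x)·S_2(x) − 3·S_3(x) + c·(n−1)·S_1(x) ≥ (2/n)·S_1(x)·(S_2(x) + n(n−1)c/2). -/

import Mathlib

open Finset

/-- The `r`-th elementary symmetric polynomial of `x : Fin n → ℝ`:
`S_r(x) = Σ_{i_1 < ⋯ < i_r} x(i_1) ⋯ x(i_r)`. -/
noncomputable def esymm (n r : ℕ) (x : Fin n → ℝ) : ℝ :=
  ∑ s ∈ Finset.univ.powersetCard r, ∏ i ∈ s, x i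

/-!
Write `x = m + y` with `m` the mean of `x`, so that `∑ y = 0`. Newton's identities express
`S₁, S₂, S₃` through `m, ∑ y², ∑ y³`; the terms in `c` cancel, the claim becomes
`∑ y³ ≤ (n - 2) m ∑ y²`, and `S₂ ≥ 0` becomes `∑ y² ≤ n (n - 1) m²`.
Put `max y = (n - 1) s`. Cauchy–Schwarz on the other `n - 1` coordinates, whose sum is
`-max y`, gives `n (n - 1) s² ≤ ∑ y²`, hence `s ≤ m`; and `0 ≤ ∑ (max y - yᵢ) (yᵢ + s)²` gives
`∑ y³ ≤ (n - 3) s ∑ y² + n (n - 1) s³ ≤ (n - 2) s ∑ y²`.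
-/

lemma esymm_eq_eval_esymm (n r : ℕ) (x : Fin n → ℝ) :
    esymm n r x = MvPolynomial.eval x (MvPolynomial.esymm (Fin n) ℝ r) := by
  simp [esymm, MvPolynomial.esymm, map_sum, map_prod]

lemma esymm_zero (n : ℕ) (x : Fin n → ℝ) : esymm n 0 x = 1 := by
  simp [esymm]

lemma esymm_one_eq_sum (n : ℕ) (x : Fin n → ℝ) : esymm n 1 x = ∑ i, x i := by
  simp [esymm_eq_eval_esymm, MvPolynomial.esymm_one]

lemma eval_mul_esymm_eq_sum (n k : ℕ) (x : Fin n → ℝ) :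
    k * esymm n k x = (-1) ^ (k + 1) *
      ∑ a ∈ antidiagonal k with a.1 < k, (-1) ^ a.1 * esymm n a.1 x * ∑ i, x i ^ a.2 := by
  simpa [esymm_eq_eval_esymm, MvPolynomial.psum] using
    congrArg (MvPolynomial.eval x) (MvPolynomial.mul_esymm_eq_sum (Fin n) ℝ k)

lemma two_mul_esymm_two (n : ℕ) (x : Fin n → ℝ) :
    2 * esymm n 2 x = esymm n 1 x ^ 2 - ∑ i, x i ^ 2 := by
  have h := eval_mul_esymm_eq_sum n 2 x
  rw [show {a ∈ antidiagonal 2 | a.1 < 2} = {(0, 2), (1, 1)} by decide, sum_pair (by decide),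
    esymm_zero] at h
  simp only [pow_one] at h
  rw [esymm_one_eq_sum] at h ⊢
  linear_combination h

lemma three_mul_esymm_three (n : ℕ) (x : Fin n → ℝ) :
    3 * esymm n 3 x =
      ∑ i, x i ^ 3 - esymm n 1 x * ∑ i, x i ^ 2 + esymm n 2 x * esymm n 1 x := by
  have h := eval_mul_esymm_eq_sum n 3 x
  rw [show {a ∈ antidiagonal 3 | a.1 < 3} = {(0, 3), (1, 2), (2, 1)} by decide,
    sum_insert (by decide), sum_pair (by decide), esymm_zero] at h
  simp only [pow_one] at h
  rw [esymm_one_eq_sum] at h ⊢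
  linear_combination h

section CenteredPowerSums

variable {ι : Type*} [Fintype ι] {y : ι → ℝ}

lemma sum_add_const_sq (h0 : ∑ i, y i = 0) (m : ℝ) :
    ∑ i, (y i + m) ^ 2 = ∑ i, y i ^ 2 + Fintype.card ι * m ^ 2 := by
  simp [add_sq, sum_add_distrib, ← sum_mul, ← mul_sum, h0]

lemma sum_add_const_cube (h0 : ∑ i, y i = 0) (m : ℝ) :
    ∑ i, (y i + m) ^ 3 = ∑ i, y i ^ 3 + 3 * m * ∑ i, y i ^ 2 + Fintype.card ι * m ^ 3 := by
  have hexpand : ∀ i, (y i + m) ^ 3 = y i ^ 3 + 3 * m * y i ^ 2 + 3 * m ^ 2 * y i + m ^ 3 :=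
    fun i => by ring
  simp [hexpand, sum_add_distrib, ← mul_sum, h0]

lemma card_mul_sq_le_of_sum_eq_zero (h0 : ∑ i, y i = 0) (j : ι) :
    Fintype.card ι * y j ^ 2 ≤ (Fintype.card ι - 1) * ∑ i, y i ^ 2 := by
  classical
  have h := sq_sum_le_card_mul_sum_sq (s := univ.erase j) (f := y)
  rw [sum_erase_eq_sub (mem_univ j), sum_erase_eq_sub (mem_univ j), h0,
    card_erase_of_mem (mem_univ j), card_univ, Nat.cast_pred (Fintype.card_pos_iff.2 ⟨j⟩)] at h
  linear_combination h

lemma sum_cube_le_of_forall_le {M : ℝ} (hM : ∀ i, y i ≤ M) (h0 : ∑ i, y i = 0) (t : ℝ) :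
    ∑ i, y i ^ 3 ≤ (M - 2 * t) * ∑ i, y i ^ 2 + Fintype.card ι * M * t ^ 2 := by
  have hnonneg : 0 ≤ ∑ i, (M - y i) * (y i + t) ^ 2 :=
    sum_nonneg fun i _ => mul_nonneg (sub_nonneg.2 (hM i)) (sq_nonneg _)
  have hexpand : ∑ i, (M - y i) * (y i + t) ^ 2
      = (M - 2 * t) * ∑ i, y i ^ 2 + Fintype.card ι * M * t ^ 2 - ∑ i, y i ^ 3 := by
    have hterm : ∀ i, (M - y i) * (y i + t) ^ 2
        = (M - 2 * t) * y i ^ 2 + (2 * M * t - t ^ 2) * y i + M * t ^ 2 - y i ^ 3 :=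
      fun i => by ring
    simp only [hterm, sum_sub_distrib, sum_add_distrib, ← mul_sum, h0, sum_const, card_univ,
      nsmul_eq_mul]
    ring
  linarith

lemma sum_cube_le_of_sum_eq_zero (hn : 2 ≤ Fintype.card ι) (h0 : ∑ i, y i = 0) {m : ℝ}
    (hm : 0 ≤ m) (hq : ∑ i, y i ^ 2 ≤ Fintype.card ι * (Fintype.card ι - 1) * m ^ 2) :
    ∑ i, y i ^ 3 ≤ (Fintype.card ι - 2) * m * ∑ i, y i ^ 2 := by
  have hn' : (2 : ℝ) ≤ Fintype.card ι := by exact_mod_cast hn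
  have : Nonempty ι := Fintype.card_pos_iff.1 (by omega)
  set n : ℝ := (Fintype.card ι : ℝ)
  set q := ∑ i, y i ^ 2
  obtain ⟨j, hj⟩ := Finite.exists_max y
  set s := y j / (n - 1)
  have hn1 : 0 < n - 1 := by linarith
  have hys : y j = (n - 1) * s := (mul_div_cancel₀ (y j) hn1.ne').symm
  have hs : 0 ≤ s := by
    have : ∑ i, y i ≤ ∑ _i : ι, y j := sum_le_sum fun i _ => hj i
    rw [h0, sum_const, card_univ, nsmul_eq_mul] at this
    exact div_nonneg (nonneg_of_mul_nonneg_right this (by positivity)) (by linarith)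
  have hsq : n * (n - 1) * s ^ 2 ≤ q := by
    have h := card_mul_sq_le_of_sum_eq_zero h0 j
    rw [hys] at h
    refine le_of_mul_le_mul_left ?_ hn1
    linear_combination h
  have hsm : s ≤ m :=
    le_of_sq_le_sq (le_of_mul_le_mul_left (hsq.trans hq) (mul_pos (by linarith) hn1)) hm
  calc ∑ i, y i ^ 3 ≤ ((n - 1) * s - 2 * s) * q + n * ((n - 1) * s) * s ^ 2 :=
        sum_cube_le_of_forall_le (fun i => hys ▸ hj i) h0 s
    _ ≤ ((n - 1) * s - 2 * s) * q + s * q := by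
        linear_combination mul_le_mul_of_nonneg_left hsq hs
    _ = (n - 2) * s * q := by ring
    _ ≤ (n - 2) * m * q := by
        gcongr

end CenteredPowerSums

theorem second_variation_coefficient_estimate_general (n : ℕ) (hn : 3 ≤ n)
    (x : Fin n → ℝ) (hS1 : 0 ≤ esymm n 1 x) (hS2 : 0 ≤ esymm n 2 x)
    (c : ℝ) :
    (2 / (n : ℝ)) * esymm n 1 x * (esymm n 2 x + (n : ℝ) * ((n : ℝ) - 1) * c / 2) ≤
      esymm n 1 x * esymm n 2 x - 3 * esymm n 3 x + c * ((n : ℝ) - 1) * esymm n 1 x := by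
  have hn0 : (n : ℝ) ≠ 0 := by positivity
  obtain ⟨m, he1⟩ : ∃ m, esymm n 1 x = n * m :=
    ⟨esymm n 1 x / n, (mul_div_cancel₀ _ hn0).symm⟩
  obtain ⟨y, hx⟩ : ∃ y : Fin n → ℝ, ∀ i, x i = y i + m :=
    ⟨fun i => x i - m, fun i => by ring⟩
  have hy0 : ∑ i, y i = 0 := by
    have h1 := esymm_one_eq_sum n x
    simp only [hx, sum_add_distrib, sum_const, card_univ, Fintype.card_fin, nsmul_eq_mul] at h1
    linarith
  have hp2 : ∑ i, x i ^ 2 = ∑ i, y i ^ 2 + n * m ^ 2 := by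
    simp only [hx, sum_add_const_sq hy0, Fintype.card_fin]
  have hp3 : ∑ i, x i ^ 3 = ∑ i, y i ^ 3 + 3 * m * ∑ i, y i ^ 2 + n * m ^ 3 := by
    simp only [hx, sum_add_const_cube hy0, Fintype.card_fin]
  have he2 := two_mul_esymm_two n x
  have he3 := three_mul_esymm_three n x
  rw [hp2, he1] at he2
  rw [hp2, hp3, he1] at he3
  have hm : 0 ≤ m := nonneg_of_mul_nonneg_right (he1 ▸ hS1) (by positivity)
  have hq : ∑ i, y i ^ 2 ≤ n * (n - 1) * m ^ 2 := by linear_combination 2 * hS2 + he2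
  have key := sum_cube_le_of_sum_eq_zero (ι := Fin n) (by rw [Fintype.card_fin]; omega) hy0 hm
    (by rwa [Fintype.card_fin])
  rw [Fintype.card_fin] at key
  rw [he3, he1, show 2 / (n : ℝ) * (n * m) = 2 * m by field_simp]
  linear_combination key + m * he2

/-- Pointwise estimate for the zeroth-order coefficient of the second
variation: for `n ≥ 3`, `x : Fin n → ℝ` with `S_1(x) ≥ 0` and `S_2(x) ≥ 0`,
and `c ≥ 0`,
`S_1(x)·S_2(x) − 3·S_3(x) + c·(n−1)·S_1(x)
  ≥ (2/n)·S_1(x)·(S_2(x) + n(n−1)c/2)`. -/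
theorem second_variation_coefficient_estimate (n : ℕ) (hn : 3 ≤ n)
    (x : Fin n → ℝ) (hS1 : 0 ≤ esymm n 1 x) (hS2 : 0 ≤ esymm n 2 x)
    (c : ℝ) (hc : 0 ≤ c) :
    (2 / (n : ℝ)) * esymm n 1 x * (esymm n 2 x + (n : ℝ) * ((n : ℝ) - 1) * c / 2) ≤
      esymm n 1 x * esymm n 2 x - 3 * esymm n 3 x + c * ((n : ℝ) - 1) * esymm n 1 x :=
  second_variation_coefficient_estimate_general n hn x hS1 hS2 c
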